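/- Let A φ_n = λ_n φ_n with A f = −(p f')' + q f and Robin boundary conditions, p ∈ C¹([0,1]). Define a(x) = (2p(x) + 2x p'(x) − x² q̃(x))/(cos θ₂ + 2 sin θ₂) and b(x) = −x²/(cos θ₂ + 2 sin θ₂) with q̃ = q − q_c. Then β_n := ⟨a, φ_n⟩ + (−λ_n + q_c) ⟨b, φ_n⟩ = p(1){−cos(θ₂) φ_n'(1) + sin(θ₂) φ_n(1)}/(cos θ₂ + 2 sin θ₂) · (cos θ₂ + 2 sin θ₂), i.e., β_n = p(1)(−cos(θ₂) φ_n'(1) + sin(θ₂) φ_n(1)). -/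

import Mathlib

open Real Set intervalIntegral

/-- Identity `β_n = ⟨a, φ_n⟩ + (−λ_n + q_c)⟨b, φ_n⟩ = p(1)(−cos(θ₂) φ_n'(1) + sin(θ₂) φ_n(1))`
obtained by integration by parts, where
`a = (2p + 2xp' − x² q̃)/(cos θ₂ + 2 sin θ₂)`, `b = −x²/(cos θ₂ + 2 sin θ₂)`, `q̃ = q − q_c`. -/
theorem beta_n_trace_identity
    (p q : ℝ → ℝ) (θ₁ θ₂ : ℝ) (hθ₁ : θ₁ ∈ Ioc 0 (π / 2)) (hθ₂ : θ₂ ∈ Icc 0 (π / 2))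
    (hp : ContDiff ℝ 1 p) (hq : Continuous q)
    (q_c lamn : ℝ) (φ : ℝ → ℝ) (hφ : ContDiff ℝ 2 φ)
    (heig : ∀ x ∈ Icc (0:ℝ) 1,
      -(deriv (fun y => p y * deriv φ y) x) + (q x - q_c) * φ x = (lamn - q_c) * φ x)
    (hbc0 : Real.cos θ₁ * φ 0 - Real.sin θ₁ * deriv φ 0 = 0)
    (hbc1 : Real.cos θ₂ * φ 1 + Real.sin θ₂ * deriv φ 1 = 0) :
    let a : ℝ → ℝ := fun x =>
      (2 * p x + 2 * x * deriv p x - x ^ 2 * (q x - q_c)) / (Real.cos θ₂ + 2 * Real.sin θ₂)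
    let b : ℝ → ℝ := fun x => -(x ^ 2) / (Real.cos θ₂ + 2 * Real.sin θ₂)
    (∫ x in (0:ℝ)..1, a x * φ x) + (-lamn + q_c) * ∫ x in (0:ℝ)..1, b x * φ x
      = p 1 * (-Real.cos θ₂ * deriv φ 1 + Real.sin θ₂ * φ 1) := by
  intro a b
  set c := Real.cos θ₂ + 2 * Real.sin θ₂ with hc_def
  have hc : 0 < c := by
    have h1 : 0 ≤ Real.cos θ₂ := Real.cos_nonneg_of_mem_Icc
      ⟨by linarith [hθ₂.1, Real.pi_pos], hθ₂.2⟩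
    have h2 : 0 ≤ Real.sin θ₂ :=
      Real.sin_nonneg_of_nonneg_of_le_pi hθ₂.1 (by linarith [hθ₂.2, Real.pi_pos])
    nlinarith [Real.sin_sq_add_cos_sq θ₂]
  -- regularity facts
  have hφ' : ContDiff ℝ 1 (deriv φ) :=
    ((contDiff_succ_iff_deriv (n := 1)).mp (by exact_mod_cast hφ)).2.2
  have hh : ContDiff ℝ 1 (fun y => p y * deriv φ y) := hp.mul hφ'
  have hpc : Continuous p := hp.continuous
  have hp' : Continuous (deriv p) := hp.continuous_deriv le_rfl
  have hφc : Continuous φ := hφ.continuous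
  have hφ'c : Continuous (deriv φ) := hφ'.continuous
  -- the antiderivative
  set G : ℝ → ℝ := fun x => 2 * x * p x * φ x - x ^ 2 * (p x * deriv φ x) with hG_def
  set S : ℝ → ℝ := fun x =>
    (2 * p x + 2 * x * deriv p x) * φ x - x ^ 2 * (q x - q_c) * φ x
      + (lamn - q_c) * (x ^ 2 * φ x) with hS_def
  have hScont : Continuous S := by
    apply Continuous.add
    · exact (((continuous_const.mul hpc).add
        ((continuous_const.mul continuous_id).mul hp')).mul hφc).sub
        ((((continuous_pow 2).mul (hq.sub continuous_const))).mul hφc)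
    · exact continuous_const.mul ((continuous_pow 2).mul hφc)
  have hderiv : ∀ x ∈ uIcc (0:ℝ) 1, HasDerivAt G (S x) x := by
    intro x hx
    rw [uIcc_of_le (by norm_num : (0:ℝ) ≤ 1)] at hx
    have hpd : HasDerivAt p (deriv p x) x := (hp.differentiable (by norm_num) x).hasDerivAt
    have hφd : HasDerivAt φ (deriv φ x) x := (hφ.differentiable (by norm_num) x).hasDerivAt
    have hhd : HasDerivAt (fun y => p y * deriv φ y)
        (deriv (fun y => p y * deriv φ y) x) x := (hh.differentiable (by norm_num) x).hasDerivAt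
    have h1 : HasDerivAt (fun y : ℝ => 2 * y) 2 x := by
      simpa using (hasDerivAt_id x).const_mul 2
    have h2 : HasDerivAt (fun y => 2 * y * p y * φ y)
        ((2 * p x + 2 * x * deriv p x) * φ x + 2 * x * p x * deriv φ x) x := by
      have := ((h1.mul hpd).mul hφd)
      simp only [Pi.mul_def] at this
      convert this using 1
      try ring
    have h3 : HasDerivAt (fun y => y ^ 2 * (p y * deriv φ y))
        (2 * x * (p x * deriv φ x) + x ^ 2 * deriv (fun y => p y * deriv φ y) x) x := by
      have := (hasDerivAt_pow 2 x).mul hhd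
      simp only [Pi.mul_def] at this
      refine this.congr_deriv ?_
      ring
    have := h2.sub h3
    refine this.congr_deriv ?_
    have he := heig x hx
    simp only [hS_def]
    have : deriv (fun y => p y * deriv φ y) x
        = (q x - q_c) * φ x - (lamn - q_c) * φ x := by linarith
    rw [this]
    ring
  have hint : ∫ x in (0:ℝ)..1, S x = G 1 - G 0 :=
    intervalIntegral.integral_eq_sub_of_hasDerivAt hderiv
      (hScont.intervalIntegrable 0 1)
  -- rewrite the two given integrals
  have hIa : ∫ x in (0:ℝ)..1, a x * φ x
      = c⁻¹ * ∫ x in (0:ℝ)..1,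
          ((2 * p x + 2 * x * deriv p x) * φ x - x ^ 2 * (q x - q_c) * φ x) := by
    rw [← intervalIntegral.integral_const_mul]
    apply intervalIntegral.integral_congr
    intro x _
    simp only [a]
    simp only [← hc_def]
    ring
  have hIb : ∫ x in (0:ℝ)..1, b x * φ x
      = c⁻¹ * ∫ x in (0:ℝ)..1, (-(x ^ 2) * φ x) := by
    rw [← intervalIntegral.integral_const_mul]
    apply intervalIntegral.integral_congr
    intro x _
    simp only [b]
    simp only [← hc_def]
    ring
  have hsplit : ∫ x in (0:ℝ)..1, S x
      = (∫ x in (0:ℝ)..1,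
          ((2 * p x + 2 * x * deriv p x) * φ x - x ^ 2 * (q x - q_c) * φ x))
        + (-lamn + q_c) * ∫ x in (0:ℝ)..1, (-(x ^ 2) * φ x) := by
    rw [← intervalIntegral.integral_const_mul, ← intervalIntegral.integral_add]
    · apply intervalIntegral.integral_congr
      intro x _
      simp only [hS_def]
      ring
    · exact ((((continuous_const.mul hpc).add
        ((continuous_const.mul continuous_id).mul hp')).mul hφc).sub
        ((((continuous_pow 2).mul (hq.sub continuous_const))).mul hφc)).intervalIntegrable 0 1
    · exact (continuous_const.mul ((continuous_pow 2).neg.mul hφc)).intervalIntegrable 0 1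
  rw [hIa, hIb, mul_comm (-lamn + q_c) _, mul_assoc, ← mul_comm (-lamn + q_c) _,
    ← mul_add, ← hsplit, hint]
  simp only [hG_def]
  norm_num
  field_simp
  rw [hc_def]
  linear_combination (2 * Real.cos θ₂ - Real.sin θ₂) * p 1 * hbc1
    + (deriv φ 1 - 2 * φ 1) * p 1 * Real.sin_sq_add_cos_sq θ₂
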